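/- arXiv:2204.10653 — 4 statements merged into one kernel-verified Lean document; each statement's English description precedes it below -/
import Mathlib

section
/- Let N ≥ 3 and let x_1 < x_2 < ... < x_N be real numbers. Then ∑ over all triples (i,j,k) of pairwise distinct indices in {1,...,N} of ((x_i - x_j)/|x_i - x_j|^2) · ((x_i - x_k)/|x_i - x_k|^2) equals 0. -/
theorem stmt_4 (N : ℕ) (hN : 3 ≤ N) (x : Fin N → ℝ) (hx : StrictMono x) :
    ∑ i : Fin N, ∑ j : Fin N, ∑ k : Fin N,
      (if i ≠ j ∧ i ≠ k ∧ j ≠ k then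
        ((x i - x j) / |x i - x j| ^ 2) * ((x i - x k) / |x i - x k| ^ 2) else 0) = 0 := by
  set F : Fin N → Fin N → Fin N → ℝ := fun i j k =>
    (if i ≠ j ∧ i ≠ k ∧ j ≠ k then
        ((x i - x j) / |x i - x j| ^ 2) * ((x i - x k) / |x i - x k| ^ 2) else 0) with hF
  have cyc : ∀ (G : Fin N → Fin N → Fin N → ℝ),
      ∑ i : Fin N, ∑ j : Fin N, ∑ k : Fin N, G j k i
        = ∑ i : Fin N, ∑ j : Fin N, ∑ k : Fin N, G i j k := by
    intro G
    rw [Finset.sum_comm]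
    apply Finset.sum_congr rfl
    intro j _
    rw [Finset.sum_comm]
  have key : ∀ i j k : Fin N, F i j k + F j k i + F k i j = 0 := by
    intro i j k
    simp only [hF]
    by_cases h1 : i = j
    · subst h1; simp
    by_cases h2 : i = k
    · subst h2; simp [Ne.symm h1]
    by_cases h3 : j = k
    · subst h3; simp [h1, h2]
    have hab : x i - x j ≠ 0 := sub_ne_zero.2 (fun h => h1 (hx.injective h))
    have hac : x i - x k ≠ 0 := sub_ne_zero.2 (fun h => h2 (hx.injective h))
    have hbc : x j - x k ≠ 0 := sub_ne_zero.2 (fun h => h3 (hx.injective h))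
    have hba : x j - x i ≠ 0 := fun h => hab (by linarith [sub_eq_zero.1 h])
    have hca : x k - x i ≠ 0 := fun h => hac (by linarith [sub_eq_zero.1 h])
    have hcb : x k - x j ≠ 0 := fun h => hbc (by linarith [sub_eq_zero.1 h])
    rw [if_pos ⟨h1, h2, h3⟩, if_pos ⟨h3, Ne.symm h1, Ne.symm h2⟩,
      if_pos ⟨Ne.symm h2, Ne.symm h3, h1⟩]
    rw [sq_abs, sq_abs, sq_abs, sq_abs, sq_abs, sq_abs]
    field_simp
    ring
  have h3S : (3 : ℝ) * (∑ i : Fin N, ∑ j : Fin N, ∑ k : Fin N, F i j k) = 0 := by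
    have e1 := cyc F
    have e2 := cyc (fun i j k => F j k i)
    calc (3 : ℝ) * (∑ i : Fin N, ∑ j : Fin N, ∑ k : Fin N, F i j k)
        = (∑ i : Fin N, ∑ j : Fin N, ∑ k : Fin N, F i j k)
          + (∑ i : Fin N, ∑ j : Fin N, ∑ k : Fin N, F j k i)
          + (∑ i : Fin N, ∑ j : Fin N, ∑ k : Fin N, F k i j) := by
          linarith [e1, e2]
      _ = ∑ i : Fin N, ∑ j : Fin N, ∑ k : Fin N, (F i j k + F j k i + F k i j) := by
          simp [Finset.sum_add_distrib]
      _ = 0 := by simp [key]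
  have := h3S
  linarith
end

section
/- Let N ≥ 3, let α ≥ 1 be real, and let x_1 < x_2 < ... < x_N be real numbers. Then ∑ over triples (i,j,l) with i,j,l pairwise distinct, j < l, of sgn(x_i - x_j)·sgn(x_i - x_l)·(1/|x_i - x_j|^α + 1/|x_i - x_l|^α) equals 2·∑_{1 ≤ j < i ≤ N} (i - j - 1)/|x_i - x_j|^α. -/
lemma sgn_sum_key (N : ℕ) (s f : Fin N → Fin N → ℝ)
    (hs1 : ∀ i j : Fin N, j < i → s i j = 1)
    (hs2 : ∀ i j : Fin N, i < j → s i j = -1)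
    (hs0 : ∀ i : Fin N, s i i = 0)
    (hfsym : ∀ i j : Fin N, f j i = f i j) :
    (∑ i : Fin N, ∑ j : Fin N, ∑ l : Fin N,
      if i ≠ j ∧ i ≠ l ∧ j ≠ l ∧ j < l then s i j * s i l * (f i j + f i l) else 0)
    = ∑ i : Fin N, ∑ j : Fin N,
        if j < i then (2 * ((i : ℕ) : ℝ) - 2 * ((j : ℕ) : ℝ) - 2) * f i j else 0 := by
  have hT : ∀ i : Fin N, ∑ l, s i l = 2 * ((i : ℕ) : ℝ) - N + 1 := by
    intro i
    have h1 : ∀ l : Fin N, s i l =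
        (if l < i then (1 : ℝ) else 0) - (if i < l then (1 : ℝ) else 0) := by
      intro l
      rcases lt_trichotomy l i with h | h | h
      · rw [hs1 i l h]; simp [h, asymm h]
      · subst h; simp [hs0]
      · rw [hs2 i l h]; simp [h, asymm h]
    rw [Finset.sum_congr rfl fun l _ => h1 l, Finset.sum_sub_distrib]
    simp only [Finset.sum_boole]
    have e1 : Finset.univ.filter (fun l : Fin N => l < i) = Finset.Iio i := by
      ext l; simp
    have e2 : Finset.univ.filter (fun l : Fin N => i < l) = Finset.Ioi i := by
      ext l; simp
    rw [e1, e2, Fin.card_Iio, Fin.card_Ioi]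
    have hiN : (i : ℕ) ≤ N - 1 := Nat.le_sub_one_of_lt i.isLt
    have h1N : 1 ≤ N := Nat.lt_of_le_of_lt (Nat.zero_le _) i.isLt
    push_cast [Nat.cast_sub hiN, Nat.cast_sub h1N]
    ring
  have stepA : ∀ i : Fin N, (∑ j : Fin N, ∑ l : Fin N,
      (if i ≠ j ∧ i ≠ l ∧ j ≠ l ∧ j < l then s i j * s i l * (f i j + f i l) else 0))
      = ∑ j : Fin N, ∑ l : Fin N,
        (if i ≠ j ∧ i ≠ l ∧ j ≠ l then s i j * s i l * f i j else 0) := by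
    intro i
    have split : ∀ j l : Fin N,
        (if i ≠ j ∧ i ≠ l ∧ j ≠ l ∧ j < l then s i j * s i l * (f i j + f i l) else 0)
        = (if i ≠ j ∧ i ≠ l ∧ j ≠ l ∧ j < l then s i j * s i l * f i j else 0)
          + (if i ≠ j ∧ i ≠ l ∧ j ≠ l ∧ j < l then s i j * s i l * f i l else 0) := by
      intro j l; split_ifs <;> ring
    simp only [split, Finset.sum_add_distrib]
    have swap : (∑ j : Fin N, ∑ l : Fin N,
        (if i ≠ j ∧ i ≠ l ∧ j ≠ l ∧ j < l then s i j * s i l * f i l else 0))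
        = ∑ j : Fin N, ∑ l : Fin N,
          (if i ≠ l ∧ i ≠ j ∧ l ≠ j ∧ l < j then s i l * s i j * f i j else 0) := by
      rw [Finset.sum_comm]
    rw [swap, ← Finset.sum_add_distrib]
    refine Finset.sum_congr rfl fun j _ => ?_
    rw [← Finset.sum_add_distrib]
    refine Finset.sum_congr rfl fun l _ => ?_
    rcases lt_trichotomy j l with h | h | h
    · have h2 : ¬(i ≠ l ∧ i ≠ j ∧ l ≠ j ∧ l < j) := fun hh => asymm h hh.2.2.2
      rw [if_neg h2, add_zero]
      exact if_congr (by have := h.ne; tauto) rfl rfl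
    · subst h
      have h2 : ¬(i ≠ j ∧ i ≠ j ∧ j ≠ j ∧ j < j) := fun hh => hh.2.2.1 rfl
      have h3 : ¬(i ≠ j ∧ i ≠ j ∧ j ≠ j) := fun hh => hh.2.2 rfl
      rw [if_neg h2, if_neg h3, add_zero]
    · have h2 : ¬(i ≠ j ∧ i ≠ l ∧ j ≠ l ∧ j < l) := fun hh => asymm h hh.2.2.2
      rw [if_neg h2, zero_add]
      exact if_congr (by have := h.ne; tauto) (by ring) rfl
  have stepB : ∀ i j : Fin N, (∑ l : Fin N,
      (if i ≠ j ∧ i ≠ l ∧ j ≠ l then s i j * s i l * f i j else 0))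
      = if i ≠ j then (2 * ((i : ℕ) : ℝ) - N + 1) * s i j * f i j - f i j else 0 := by
    intro i j
    by_cases hij : i = j
    · simp [hij]
    · have h1 : ∀ l : Fin N,
          (if i ≠ j ∧ i ≠ l ∧ j ≠ l then s i j * s i l * f i j else 0)
          = s i j * f i j * s i l - (if l = j then s i j * f i j * s i j else 0) := by
        intro l
        by_cases hlj : l = j
        · subst hlj
          have h2 : ¬(i ≠ l ∧ i ≠ l ∧ l ≠ l) := fun hh => hh.2.2 rfl
          rw [if_neg h2, if_pos rfl]; ring
        · by_cases hil : i = l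
          · subst hil
            have h2 : ¬(i ≠ j ∧ i ≠ i ∧ j ≠ i) := fun hh => hh.2.1 rfl
            rw [if_neg h2, if_neg hlj, hs0 i]; ring
          · rw [if_pos ⟨hij, hil, fun hh => hlj hh.symm⟩, if_neg hlj, sub_zero]; ring
      have e2 : (∑ l : Fin N, if l = j then s i j * f i j * s i j else 0)
          = s i j * f i j * s i j := by
        rw [Finset.sum_ite_eq' Finset.univ j]; simp
      rw [Finset.sum_congr rfl fun l _ => h1 l, Finset.sum_sub_distrib, e2,
        ← Finset.mul_sum, hT i, if_pos hij]
      have hs2' : s i j * s i j = 1 := by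
        rcases lt_trichotomy i j with h | h | h
        · rw [hs2 i j h]; ring
        · exact absurd h hij
        · rw [hs1 i j h]; ring
      linear_combination (-(f i j)) * hs2'
  rw [Finset.sum_congr rfl fun i _ => stepA i,
    Finset.sum_congr rfl fun i _ => Finset.sum_congr rfl fun j _ => stepB i j]
  have split2 : ∀ i j : Fin N,
      (if i ≠ j then (2 * ((i : ℕ) : ℝ) - N + 1) * s i j * f i j - f i j else 0)
      = (if j < i then (2 * ((i : ℕ) : ℝ) - N + 1) * s i j * f i j - f i j else 0)
        + (if i < j then (2 * ((i : ℕ) : ℝ) - N + 1) * s i j * f i j - f i j else 0) := by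
    intro i j
    rcases lt_trichotomy i j with h | h | h
    · rw [if_pos h.ne, if_neg (asymm h), if_pos h, zero_add]
    · subst h; simp
    · rw [if_pos h.ne', if_pos h, if_neg (asymm h), add_zero]
  simp only [split2, Finset.sum_add_distrib]
  have comm2 : (∑ i : Fin N, ∑ j : Fin N,
      if i < j then (2 * ((i : ℕ) : ℝ) - N + 1) * s i j * f i j - f i j else 0)
      = ∑ i : Fin N, ∑ j : Fin N,
        if j < i then (2 * ((j : ℕ) : ℝ) - N + 1) * s j i * f j i - f j i else 0 :=
    Finset.sum_comm
  rw [comm2, ← Finset.sum_add_distrib]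
  simp only [← Finset.sum_add_distrib]
  refine Finset.sum_congr rfl fun i _ => Finset.sum_congr rfl fun j _ => ?_
  by_cases h : j < i
  · rw [if_pos h, if_pos h, if_pos h, hs1 i j h, hs2 j i h, hfsym i j]
    ring
  · rw [if_neg h, if_neg h, if_neg h, add_zero]

theorem stmt_5 (N : ℕ) (hN : 3 ≤ N) (α : ℝ) (hα : 1 ≤ α) (x : Fin N → ℝ) (hx : StrictMono x) :
    ∑ i : Fin N, ∑ j : Fin N, ∑ l : Fin N,
      (if i ≠ j ∧ i ≠ l ∧ j ≠ l ∧ j < l then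
        ((x i - x j) / |x i - x j|) * ((x i - x l) / |x i - x l|) *
          (1 / |x i - x j| ^ α + 1 / |x i - x l| ^ α) else 0)
    = 2 * ∑ i : Fin N, ∑ j ∈ Finset.univ.filter (· < i),
        (((i : ℕ) : ℝ) - ((j : ℕ) : ℝ) - 1) / |x i - x j| ^ α := by
  have hs1 : ∀ i j : Fin N, j < i → (x i - x j) / |x i - x j| = 1 := by
    intro i j h
    have hpos : 0 < x i - x j := sub_pos.mpr (hx h)
    rw [abs_of_pos hpos, div_self hpos.ne']
  have hs2 : ∀ i j : Fin N, i < j → (x i - x j) / |x i - x j| = -1 := by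
    intro i j h
    have hneg : x i - x j < 0 := sub_neg.mpr (hx h)
    rw [abs_of_neg hneg, div_neg, div_self hneg.ne]
  have hs0 : ∀ i : Fin N, (x i - x i) / |x i - x i| = 0 := by intro i; simp
  have hfsym : ∀ i j : Fin N, 1 / |x j - x i| ^ α = 1 / |x i - x j| ^ α := by
    intro i j; rw [abs_sub_comm]
  have key := sgn_sum_key N (fun i j => (x i - x j) / |x i - x j|)
    (fun i j => 1 / |x i - x j| ^ α) hs1 hs2 hs0 hfsym
  rw [key, Finset.mul_sum]
  refine Finset.sum_congr rfl fun i _ => ?_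
  rw [Finset.mul_sum, Finset.sum_filter]
  refine Finset.sum_congr rfl fun j _ => ?_
  by_cases h : j < i
  · rw [if_pos h, if_pos h]; ring
  · rw [if_neg h, if_neg h]
end

section
/- Let N ≥ 2, α ≥ 1, and x_1 < x_2 < ... < x_N real. Define U_int(x) = (1/(2N)) ∑_{i ≠ j} V(x_i − x_j) where V'(t) = −t/|t|^{α+1}, i.e. the gradient of U_int has i-th component (1/N) ∑_{j ≠ i} V'(x_i − x_j). Then the Euclidean norm of the gradient of U_int at x is at least (4/(N^2 (N−1) √N)) · ∑_{1 ≤ j < i ≤ N} 1/|x_i − x_j|^α. -/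
open Finset

set_option maxHeartbeats 1000000 in
theorem stmt_7 (N : ℕ) (hN : 2 ≤ N) (α : ℝ) (hα : 1 ≤ α) (x : Fin N → ℝ) (hx : StrictMono x) :
    Real.sqrt (∑ i : Fin N,
        (-(1 / (N : ℝ)) * ∑ j ∈ Finset.univ \ {i}, (x i - x j) / |x i - x j| ^ (α + 1)) ^ 2)
      ≥ (4 / ((N : ℝ) ^ 2 * ((N : ℝ) - 1) * Real.sqrt N)) *
        ∑ i : Fin N, ∑ j ∈ Finset.univ.filter (· < i), 1 / |x i - x j| ^ α := by
  obtain ⟨n, rfl⟩ : ∃ n, N = n + 2 := ⟨N - 2, by omega⟩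
  set Nr : ℝ := ((n + 2 : ℕ) : ℝ) with hNrdef
  have hNr2 : (2:ℝ) ≤ Nr := by
    rw [hNrdef]; push_cast; linarith [Nat.cast_nonneg (α := ℝ) n]
  have hNr0 : (0:ℝ) < Nr := by linarith
  set a : Fin (n+2) → Fin (n+2) → ℝ := fun i j => 1 / |x i - x j| ^ α with hadef
  set φ : Fin (n+2) → Fin (n+2) → ℝ := fun i j => (x i - x j) / |x i - x j| ^ (α+1) with hφdef
  set g : Fin (n+2) → ℝ :=
    fun i => -(1 / Nr) * ∑ j ∈ Finset.univ \ {i}, φ i j with hgdef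
  have ha_symm : ∀ i j, a i j = a j i := by
    intro i j; simp only [hadef]; rw [abs_sub_comm]
  have ha_nonneg : ∀ i j, 0 ≤ a i j := by
    intro i j; simp only [hadef]; positivity
  have hφ_self : ∀ i, φ i i = 0 := by intro i; simp [hφdef]
  have hφ_pos : ∀ i j, j < i → φ i j = a i j := by
    intro i j hij
    have hxlt : x j < x i := hx hij
    have ht : 0 < x i - x j := by linarith
    simp only [hφdef, hadef, abs_of_pos ht]
    rw [Real.rpow_add ht, Real.rpow_one, div_eq_div_iff (by positivity) (by positivity)]
    ring
  have hφ_anti : ∀ i j, φ i j = -(φ j i) := by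
    intro i j
    simp only [hφdef]
    rw [abs_sub_comm, ← neg_div, neg_sub]
  have hφ_neg : ∀ i j, i < j → φ i j = -(a i j) := by
    intro i j hij
    rw [hφ_anti, hφ_pos j i hij, ha_symm]
  set T : Fin (n+2) → ℝ :=
    fun k => ∑ m : Fin (n+2), ∑ j : Fin (n+2), (if m ≤ k ∧ k < j then a m j else 0) with hTdef
  have hT_eq : ∀ k, T k = ∑ m : Fin (n+2), ∑ j : Fin (n+2),
      (if m ≤ k ∧ k < j then a m j else 0) := fun k => by rw [hTdef]
  have hT_nonneg : ∀ k, 0 ≤ T k := by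
    intro k; rw [hT_eq]
    refine Finset.sum_nonneg fun m _ => Finset.sum_nonneg fun j _ => ?_
    split_ifs; exacts [ha_nonneg m j, le_rfl]
  set S : ℝ := ∑ i : Fin (n+2), ∑ j ∈ Finset.univ.filter (· < i), a i j with hSdef
  have hS_nonneg : 0 ≤ S :=
    Finset.sum_nonneg fun i _ => Finset.sum_nonneg fun j _ => ha_nonneg i j
  have hS_eq : S = ∑ m : Fin (n+2), ∑ j : Fin (n+2), (if m < j then a m j else 0) := by
    rw [hSdef]
    calc ∑ i : Fin (n+2), ∑ j ∈ Finset.univ.filter (· < i), a i j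
        = ∑ i : Fin (n+2), ∑ j : Fin (n+2), if j < i then a i j else 0 :=
          Finset.sum_congr rfl fun i _ => Finset.sum_filter _ _
      _ = ∑ j : Fin (n+2), ∑ i : Fin (n+2), if j < i then a i j else 0 := Finset.sum_comm
      _ = ∑ m : Fin (n+2), ∑ j : Fin (n+2), if m < j then a m j else 0 := by
          refine Finset.sum_congr rfl fun m _ => Finset.sum_congr rfl fun j _ => ?_
          rw [ha_symm j m]
  set K : Finset (Fin (n+2)) := Finset.Iio (Fin.last (n+1)) with hKdef
  have hKcard : K.card = n + 1 := by
    rw [hKdef, Fin.card_Iio]; rfl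
  have hsumT : S ≤ ∑ k ∈ K, T k := by
    have hswap : ∑ k ∈ K, T k
        = ∑ m : Fin (n+2), ∑ j : Fin (n+2), ∑ k ∈ K, (if m ≤ k ∧ k < j then a m j else 0) := by
      simp only [hT_eq]
      rw [Finset.sum_comm]
      exact Finset.sum_congr rfl fun m _ => Finset.sum_comm
    rw [hS_eq, hswap]
    refine Finset.sum_le_sum fun m _ => Finset.sum_le_sum fun j _ => ?_
    by_cases h : m < j
    · rw [if_pos h]
      have hmem : m ∈ K := by
        rw [hKdef, Finset.mem_Iio]
        exact lt_of_lt_of_le h (Fin.le_last j)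
      have hnn : ∀ k ∈ K, (0:ℝ) ≤ if m ≤ k ∧ k < j then a m j else 0 := by
        intro k _
        split_ifs
        exacts [ha_nonneg m j, le_rfl]
      have hle := Finset.single_le_sum (f := fun k => if m ≤ k ∧ k < j then a m j else 0) hnn hmem
      simpa [le_refl, h] using hle
    · rw [if_neg h]
      refine Finset.sum_nonneg fun k _ => ?_
      split_ifs
      exacts [ha_nonneg m j, le_rfl]
  obtain ⟨k, hkK, hTk⟩ : ∃ k ∈ K, S / ((n:ℝ)+1) ≤ T k := by
    apply Finset.exists_le_of_sum_le
    · refine ⟨0, ?_⟩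
      rw [hKdef, Finset.mem_Iio]
      exact Fin.last_pos'
    · rw [Finset.sum_const, hKcard, nsmul_eq_mul]
      push_cast
      rw [mul_div_cancel₀]
      · exact hsumT
      · positivity
  set ξ : Fin (n+2) → ℝ := fun m => if m ≤ k then (-1:ℝ) else 1 with hξdef
  have hξ_sq : ∑ m : Fin (n+2), ξ m ^ 2 = Nr := by
    have h1 : ∀ m : Fin (n+2), ξ m ^ 2 = 1 := by
      intro m; simp only [hξdef]; split_ifs <;> norm_num
    rw [Finset.sum_congr rfl fun m _ => h1 m]
    simp [hNrdef]
  have hg_full : ∀ m, g m = -(1/Nr) * ∑ j : Fin (n+2), φ m j := by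
    intro m
    simp only [hgdef]
    congr 1
    rw [Finset.sdiff_singleton_eq_erase]
    rw [← Finset.sum_erase_add Finset.univ _ (Finset.mem_univ m), hφ_self, add_zero]
  have hpoint : ∀ m j : Fin (n+2), (ξ m - ξ j) * φ m j
      = 2 * ((if m ≤ k ∧ k < j then a m j else 0) + (if j ≤ k ∧ k < m then a m j else 0)) := by
    intro m j
    rcases lt_trichotomy m j with h | h | h
    · rw [hφ_neg m j h]
      have hjk : ¬(j ≤ k ∧ k < m) := fun ⟨h1, h2⟩ => absurd (h.trans (h1.trans_lt h2)) (lt_irrefl m)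
      rw [if_neg hjk]
      by_cases h1 : m ≤ k
      · by_cases h2 : j ≤ k
        · have hni : ¬(m ≤ k ∧ k < j) := fun ⟨_, hc⟩ => absurd hc (not_lt.mpr h2)
          rw [if_neg hni]
          simp only [hξdef, if_pos h1, if_pos h2]
          ring
        · have h2' : k < j := not_le.mp h2
          rw [if_pos ⟨h1, h2'⟩]
          simp only [hξdef, if_pos h1, if_neg h2]
          ring
      · have hni : ¬(m ≤ k ∧ k < j) := fun ⟨hc, _⟩ => h1 hc
        rw [if_neg hni]
        have h2 : ¬ j ≤ k := fun hc => h1 (h.le.trans hc)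
        simp only [hξdef, if_neg h1, if_neg h2]
        ring
    · subst h
      rw [hφ_self]
      have h1 : ¬(m ≤ k ∧ k < m) := fun ⟨ha', hb⟩ => absurd (ha'.trans_lt hb) (lt_irrefl m)
      rw [if_neg h1]
      ring
    · rw [hφ_pos m j h]
      have hmk : ¬(m ≤ k ∧ k < j) := fun ⟨h1, h2⟩ => absurd (h.trans (h1.trans_lt h2)) (lt_irrefl j)
      rw [if_neg hmk]
      by_cases h1 : j ≤ k
      · by_cases h2 : m ≤ k
        · have hni : ¬(j ≤ k ∧ k < m) := fun ⟨_, hc⟩ => absurd hc (not_lt.mpr h2)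
          rw [if_neg hni]
          simp only [hξdef, if_pos h1, if_pos h2]
          ring
        · have h2' : k < m := not_le.mp h2
          rw [if_pos ⟨h1, h2'⟩]
          simp only [hξdef, if_pos h1, if_neg h2]
          ring
      · have hni : ¬(j ≤ k ∧ k < m) := fun ⟨hc, _⟩ => h1 hc
        rw [if_neg hni]
        have h2 : ¬ m ≤ k := fun hc => h1 (h.le.trans hc)
        simp only [hξdef, if_neg h1, if_neg h2]
        ring
  have hgsum : ∑ m : Fin (n+2), ξ m * g m = -(2/Nr) * T k := by
    have h1 : ∑ m : Fin (n+2), ξ m * g m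
        = -(1/Nr) * ∑ m : Fin (n+2), ∑ j : Fin (n+2), ξ m * φ m j := by
      rw [Finset.mul_sum]
      refine Finset.sum_congr rfl fun m _ => ?_
      rw [hg_full m, ← Finset.mul_sum]
      ring
    have hsw : ∑ m : Fin (n+2), ∑ j : Fin (n+2), ξ m * φ m j
        = ∑ m : Fin (n+2), ∑ j : Fin (n+2), -(ξ j * φ m j) := by
      rw [Finset.sum_comm]
      refine Finset.sum_congr rfl fun m _ => Finset.sum_congr rfl fun j _ => ?_
      rw [hφ_anti j m]
      ring
    have h2 : (2:ℝ) * ∑ m : Fin (n+2), ∑ j : Fin (n+2), ξ m * φ m j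
        = ∑ m : Fin (n+2), ∑ j : Fin (n+2), (ξ m - ξ j) * φ m j := by
      calc (2:ℝ) * ∑ m : Fin (n+2), ∑ j : Fin (n+2), ξ m * φ m j
          = (∑ m : Fin (n+2), ∑ j : Fin (n+2), ξ m * φ m j)
            + ∑ m : Fin (n+2), ∑ j : Fin (n+2), -(ξ j * φ m j) := by rw [← hsw]; ring
        _ = ∑ m : Fin (n+2), ∑ j : Fin (n+2), (ξ m - ξ j) * φ m j := by
            simp only [sub_mul, Finset.sum_sub_distrib, Finset.sum_neg_distrib]
            ring
    have hT' : ∑ m : Fin (n+2), ∑ j : Fin (n+2), (if j ≤ k ∧ k < m then a m j else 0) = T k := by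
      rw [Finset.sum_comm, hT_eq]
      refine Finset.sum_congr rfl fun m _ => Finset.sum_congr rfl fun j _ => ?_
      rw [ha_symm j m]
    have h3 : ∑ m : Fin (n+2), ∑ j : Fin (n+2), (ξ m - ξ j) * φ m j = 4 * T k := by
      calc ∑ m : Fin (n+2), ∑ j : Fin (n+2), (ξ m - ξ j) * φ m j
          = ∑ m : Fin (n+2), ∑ j : Fin (n+2),
              (2 * ((if m ≤ k ∧ k < j then a m j else 0)
                + (if j ≤ k ∧ k < m then a m j else 0))) :=
            Finset.sum_congr rfl fun m _ => Finset.sum_congr rfl fun j _ => hpoint m j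
        _ = 2 * ((∑ m : Fin (n+2), ∑ j : Fin (n+2), (if m ≤ k ∧ k < j then a m j else 0))
            + ∑ m : Fin (n+2), ∑ j : Fin (n+2), (if j ≤ k ∧ k < m then a m j else 0)) := by
            simp only [mul_add, Finset.sum_add_distrib, Finset.mul_sum]
        _ = 4 * T k := by rw [hT', ← hT_eq]; ring
    have hD : ∑ m : Fin (n+2), ∑ j : Fin (n+2), ξ m * φ m j = 2 * T k := by linarith
    rw [h1, hD]; ring
  have hCS : 2/Nr * T k ≤ Real.sqrt Nr * Real.sqrt (∑ i : Fin (n+2), g i ^ 2) := by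
    have h1 := Finset.sum_mul_sq_le_sq_mul_sq Finset.univ (fun m => -(ξ m)) g
    have h2 : ∑ m : Fin (n+2), -(ξ m) * g m = 2/Nr * T k := by
      have : ∑ m : Fin (n+2), -(ξ m) * g m = -∑ m : Fin (n+2), ξ m * g m := by
        rw [← Finset.sum_neg_distrib]
        exact Finset.sum_congr rfl fun m _ => by ring
      rw [this, hgsum]; ring
    have h3 : ∑ m : Fin (n+2), (-(ξ m)) ^ 2 = Nr := by
      simp only [neg_sq]; exact hξ_sq
    rw [h2, h3] at h1
    have hnn : 0 ≤ 2/Nr * T k := mul_nonneg (by positivity) (hT_nonneg k)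
    calc 2/Nr * T k = Real.sqrt ((2/Nr * T k)^2) := (Real.sqrt_sq hnn).symm
      _ ≤ Real.sqrt (Nr * ∑ i : Fin (n+2), g i ^ 2) := Real.sqrt_le_sqrt h1
      _ = Real.sqrt Nr * Real.sqrt (∑ i : Fin (n+2), g i ^ 2) :=
          Real.sqrt_mul (le_of_lt hNr0) _
  have hr0 : 0 < Real.sqrt Nr := Real.sqrt_pos.mpr hNr0
  set G : ℝ := Real.sqrt (∑ i : Fin (n+2), g i ^ 2) with hGdef
  have hG0 : 0 ≤ G := Real.sqrt_nonneg _
  have hn1 : ((n:ℝ) + 1) = Nr - 1 := by rw [hNrdef]; push_cast; ring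
  have h2 : S ≤ T k * (Nr - 1) := by
    rw [div_le_iff₀ (by positivity)] at hTk
    rw [← hn1]
    exact hTk
  have h1 : 2 * T k ≤ Nr * (Real.sqrt Nr * G) := by
    rw [div_mul_eq_mul_div, div_le_iff₀ hNr0] at hCS
    nlinarith [hCS]
  have main : G ≥ 4 / (Nr^2 * (Nr - 1) * Real.sqrt Nr) * S := by
    have hNr1 : (0:ℝ) < Nr - 1 := by linarith
    rw [ge_iff_le, div_mul_eq_mul_div, div_le_iff₀ (by positivity)]
    have hpos1 : (0:ℝ) ≤ Nr * (Nr - 1) := by nlinarith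
    have h3 : 2 * T k * (Nr * (Nr-1)) ≤ Nr * (Real.sqrt Nr * G) * (Nr * (Nr-1)) :=
      mul_le_mul_of_nonneg_right h1 hpos1
    have h4 : (2*Nr) * S ≤ (2*Nr) * (T k * (Nr-1)) :=
      mul_le_mul_of_nonneg_left h2 (by linarith)
    have h5 : 4 * S ≤ (2*Nr) * S := by nlinarith
    nlinarith [h3, h4, h5]
  simp only [hGdef, hgdef, hφdef] at main
  exact main
end

section
/- Let N ≥ 2 and let X, Y: [0,∞) → ℝ^N be differentiable functions with ordered coordinates (X^1_t < ... < X^N_t and Y^1_t < ... < Y^N_t for all t ≥ 0) satisfying, for λ > 0 and each i, dX^i/dt = −λ X^i_t + (1/N) ∑_{j≠i} 1/(X^i_t − X^j_t) and the same equation for Y. Then for all t ≥ 0, ∑_{i=1}^N (X^i_t − Y^i_t)^2 ≤ e^{−2λt} ∑_{i=1}^N (X^i_0 − Y^i_0)^2. -/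
lemma pair_alg (a b : ℝ) (ha : a ≠ 0) (hb : b ≠ 0) (hab : 0 < a * b) :
    (a - b) * (1/a - 1/b) ≤ 0 := by
  have h : (a - b) * (1/a - 1/b) = -((a - b)^2) / (a * b) := by
    field_simp; ring
  rw [h]
  apply div_nonpos_of_nonpos_of_nonneg
  · simpa using sq_nonneg (a - b)
  · exact hab.le

lemma key_ineq (N : ℕ) (x y : Fin N → ℝ) (hx : StrictMono x) (hy : StrictMono y) :
    ∑ i, (x i - y i) * ∑ j ∈ Finset.univ \ {i}, (1/(x i - x j) - 1/(y i - y j)) ≤ 0 := by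
  set f : Fin N → Fin N → ℝ := fun i j => (x i - y i) * (1/(x i - x j) - 1/(y i - y j)) with hf
  have hmul : ∀ i : Fin N, (x i - y i) * ∑ j ∈ Finset.univ \ {i}, (1/(x i - x j) - 1/(y i - y j))
      = ∑ j ∈ Finset.univ \ {i}, f i j := fun i => Finset.mul_sum _ _ _
  simp_rw [hmul]
  have hswap : ∑ i, ∑ j ∈ Finset.univ \ {i}, f i j = ∑ i, ∑ j ∈ Finset.univ \ {i}, f j i := by
    apply Finset.sum_comm'
    intro i j
    simp [eq_comm, ne_comm]
  have h2 : (2:ℝ) * ∑ i, ∑ j ∈ Finset.univ \ {i}, f i j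
      = ∑ i, ∑ j ∈ Finset.univ \ {i}, (f i j + f j i) := by
    rw [two_mul]
    nth_rewrite 2 [hswap]
    rw [← Finset.sum_add_distrib]
    congr 1; ext i; rw [← Finset.sum_add_distrib]
  have hterm : ∀ i j : Fin N, i ≠ j → f i j + f j i ≤ 0 := by
    intro i j hij
    set a := x i - x j with hA
    set b := y i - y j with hB
    have ha : a ≠ 0 := sub_ne_zero.mpr (fun h => hij (hx.injective h))
    have hb : b ≠ 0 := sub_ne_zero.mpr (fun h => hij (hy.injective h))
    have hab : 0 < a * b := by
      rcases lt_or_gt_of_ne hij with h | h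
      · exact mul_pos_of_neg_of_neg (sub_neg.mpr (hx h)) (sub_neg.mpr (hy h))
      · exact mul_pos (sub_pos.mpr (hx h)) (sub_pos.mpr (hy h))
    have he : f i j + f j i = (a - b) * (1/a - 1/b) := by
      have e1 : x j - x i = -a := by rw [hA]; ring
      have e2 : y j - y i = -b := by rw [hB]; ring
      simp only [hf, e1, e2, one_div, ← hA, ← hB]
      rw [inv_neg, inv_neg]
      ring
    rw [he]
    exact pair_alg a b ha hb hab
  have hsum : ∑ i, ∑ j ∈ Finset.univ \ {i}, (f i j + f j i) ≤ 0 := by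
    apply Finset.sum_nonpos
    intro i _
    apply Finset.sum_nonpos
    intro j hj
    have : j ≠ i := by simpa [Finset.mem_sdiff] using hj
    exact hterm i j this.symm
  linarith [h2 ▸ hsum]

theorem stmt_9 (N : ℕ) (hN : 2 ≤ N) (lam : ℝ) (hlam : 0 < lam)
    (X Y : ℝ → Fin N → ℝ)
    (hXord : ∀ t ≥ (0 : ℝ), StrictMono (X t)) (hYord : ∀ t ≥ (0 : ℝ), StrictMono (Y t))
    (hX : ∀ t ≥ (0 : ℝ), ∀ i, HasDerivAt (fun s => X s i)
      (-lam * X t i + (1 / (N : ℝ)) * ∑ j ∈ Finset.univ \ {i}, 1 / (X t i - X t j)) t)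
    (hY : ∀ t ≥ (0 : ℝ), ∀ i, HasDerivAt (fun s => Y s i)
      (-lam * Y t i + (1 / (N : ℝ)) * ∑ j ∈ Finset.univ \ {i}, 1 / (Y t i - Y t j)) t) :
    ∀ t ≥ (0 : ℝ), ∑ i, (X t i - Y t i) ^ 2
      ≤ Real.exp (-2 * lam * t) * ∑ i, (X 0 i - Y 0 i) ^ 2 := by
  set φ : ℝ → ℝ := fun s => ∑ i, (X s i - Y s i) ^ 2 with hφdef
  set dd : ℝ → Fin N → ℝ := fun t i =>
    ((-lam * X t i + (1 / (N : ℝ)) * ∑ j ∈ Finset.univ \ {i}, 1 / (X t i - X t j))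
     - (-lam * Y t i + (1 / (N : ℝ)) * ∑ j ∈ Finset.univ \ {i}, 1 / (Y t i - Y t j))) with hdd
  have hφ : ∀ t ≥ (0:ℝ), HasDerivAt φ (∑ i, 2 * (X t i - Y t i) * dd t i) t := by
    intro t ht
    have : HasDerivAt φ (∑ i, (2:ℕ) * (X t i - Y t i) ^ (2-1) * dd t i) t := by
      apply HasDerivAt.fun_sum
      intro i _
      exact ((hX t ht i).sub (hY t ht i)).pow 2
    convert this using 2 with i
    norm_num
  set g : ℝ → ℝ := fun s => Real.exp (2 * lam * s) * φ s with hgdef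
  have hg : ∀ t ≥ (0:ℝ), HasDerivAt g
      (Real.exp (2 * lam * t) * (2 * lam * φ t + ∑ i, 2 * (X t i - Y t i) * dd t i)) t := by
    intro t ht
    have he : HasDerivAt (fun s => Real.exp (2 * lam * s)) (2 * lam * Real.exp (2 * lam * t)) t := by
      have := ((hasDerivAt_id t).const_mul (2 * lam)).exp
      simpa [mul_comm] using this
    have := he.fun_mul (hφ t ht)
    exact this.congr_deriv (by ring)
  have hder_nonpos : ∀ t ≥ (0:ℝ),
      Real.exp (2 * lam * t) * (2 * lam * φ t + ∑ i, 2 * (X t i - Y t i) * dd t i) ≤ 0 := by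
    intro t ht
    apply mul_nonpos_of_nonneg_of_nonpos (Real.exp_pos _).le
    have hexpand : 2 * lam * φ t + ∑ i, 2 * (X t i - Y t i) * dd t i
        = (2 / (N:ℝ)) * ∑ i, (X t i - Y t i) *
            ∑ j ∈ Finset.univ \ {i}, (1/(X t i - X t j) - 1/(Y t i - Y t j)) := by
      rw [hφdef, Finset.mul_sum, Finset.mul_sum, ← Finset.sum_add_distrib]
      refine Finset.sum_congr rfl fun i _ => ?_
      rw [hdd]
      have hAB : ∑ j ∈ Finset.univ \ {i}, (1/(X t i - X t j) - 1/(Y t i - Y t j))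
          = (∑ j ∈ Finset.univ \ {i}, 1/(X t i - X t j))
            - ∑ j ∈ Finset.univ \ {i}, 1/(Y t i - Y t j) := Finset.sum_sub_distrib _ _
      rw [hAB]
      ring
    rw [hexpand]
    apply mul_nonpos_of_nonneg_of_nonpos (by positivity)
    exact key_ineq N (X t) (Y t) (hXord t ht) (hYord t ht)
  have hanti : AntitoneOn g (Set.Ici 0) := by
    apply antitoneOn_of_deriv_nonpos (convex_Ici 0)
    · exact fun s hs => ((hg s hs).continuousAt).continuousWithinAt
    · intro s hs
      rw [interior_Ici] at hs
      exact ((hg s hs.le).differentiableAt).differentiableWithinAt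
    · intro s hs
      rw [interior_Ici] at hs
      rw [(hg s hs.le).deriv]
      exact hder_nonpos s hs.le
  intro t ht
  have h0 : g t ≤ g 0 := hanti Set.self_mem_Ici ht ht
  have hg0 : g 0 = φ 0 := by simp [hgdef]
  have : Real.exp (2 * lam * t) * φ t ≤ φ 0 := by rw [← hg0]; exact h0
  calc φ t = Real.exp (-2 * lam * t) * (Real.exp (2 * lam * t) * φ t) := by
        rw [← mul_assoc, ← Real.exp_add]; ring_nf; simp
    _ ≤ Real.exp (-2 * lam * t) * φ 0 :=
        mul_le_mul_of_nonneg_left this (Real.exp_pos _).le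
end
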